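/- The evaluators E₁ and E₃ for Combinatory Logic are inconvertible: E₁ ≠β E₃, where ⟨M⟩ denotes λz.zM for a variable z not free in M, ω = λx.xx, E₁ = ω(λw.⟨λabc.ab((wwb)(wwc))⟩), and E₃ = ⟨ω(λwabc.ab(Sbc(ww)))⟩. -/

import Mathlib

/-- Untyped λ-terms in de Bruijn notation (the variables are `ℕ`). -/
inductive Lam : Type
  | var : ℕ → Lam
  | app : Lam → Lam → Lam
  | abs : Lam → Lam
  deriving DecidableEq

namespace Lam

/-- Shift the free de Bruijn indices `≥ d` up by one. -/
def lift (d : ℕ) : Lam → Lam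
  | var n => if n < d then var n else var (n + 1)
  | app s t => app (lift d s) (lift d t)
  | abs t => abs (lift (d + 1) t)

/-- Capture-avoiding substitution `t[k := u]`. -/
def subst : Lam → ℕ → Lam → Lam
  | var n, k, u => if n < k then var n else if n = k then u else var (n - 1)
  | app s t, k, u => app (subst s k u) (subst t k u)
  | abs t, k, u => abs (subst t (k + 1) (lift 0 u))

/-- One-step β-reduction `→β`: the compatible closure of the β-rule. -/
inductive Beta : Lam → Lam → Prop
  | beta (t u : Lam) : Beta (Lam.app (Lam.abs t) u) (subst t 0 u)
  | appL {s s' : Lam} (t : Lam) : Beta s s' → Beta (Lam.app s t) (Lam.app s' t)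
  | appR (s : Lam) {t t' : Lam} : Beta t t' → Beta (Lam.app s t) (Lam.app s t')
  | abs {t t' : Lam} : Beta t t' → Beta (Lam.abs t) (Lam.abs t')

/-- `↠β`: the reflexive–transitive closure of `→β`. -/
def BetaStar : Lam → Lam → Prop := Relation.ReflTransGen Beta

/-- `→β^k`: the `k`-fold composition of `→β`. -/
def BetaN : ℕ → Lam → Lam → Prop
  | 0, s, t => s = t
  | k + 1, s, t => ∃ u, Beta s u ∧ BetaN k u t

/-- `=β`, β-convertibility: the equivalence closure of `→β`. -/
inductive Conv : Lam → Lam → Prop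
  | rel {s t : Lam} : Beta s t → Conv s t
  | refl (s : Lam) : Conv s s
  | symm {s t : Lam} : Conv s t → Conv t s
  | trans {s t u : Lam} : Conv s t → Conv t u → Conv s u

/-- The free variables of a term (as de Bruijn indices). -/
def FV : Lam → Finset ℕ
  | var n => {n}
  | app s t => FV s ∪ FV t
  | abs t => ((FV t).erase 0).image (· - 1)

/-- `Y` is a fixed point combinator (fpc): `Y x =β x (Y x)` for a variable `x` not free in `Y`. -/
def IsFPC (Y : Lam) : Prop :=
  ∀ x : ℕ, x ∉ FV Y → Conv (app Y (var x)) (app (var x) (app Y (var x)))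

/-- `I = λx.x` -/
def combI : Lam := abs (var 0)

/-- `S = λxyz.xz(yz)` -/
def combS : Lam := abs (abs (abs (app (app (var 2) (var 0)) (app (var 1) (var 0)))))

/-- `B = λxyz.x(yz)` -/
def combB : Lam := abs (abs (abs (app (var 2) (app (var 1) (var 0)))))

/-- `δ = λab.b(ab)` -/
def delta : Lam := abs (abs (app (var 0) (app (var 1) (var 0))))

/-- `η = λxf.f(xxf)` -/
def etaC : Lam := abs (abs (app (var 0) (app (app (var 1) (var 1)) (var 0))))

/-- Curry's fpc `Y₀ = λf.(λx.f(xx))(λx.f(xx))` -/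
def curryY : Lam :=
  abs (app (abs (app (var 1) (app (var 0) (var 0))))
    (abs (app (var 1) (app (var 0) (var 0)))))

/-- `A B ⋯ B`: `A` applied to `n` copies of `B`, associating to the left. -/
def appN (A B : Lam) : ℕ → Lam
  | 0 => A
  | n + 1 => app (appN A B n) B

/-- `M N₁ ⋯ Nₘ`: `M` applied to the terms in `L`, associating to the left. -/
def appList (M : Lam) (L : List Lam) : Lam := L.foldl app M

/-- `ω = λx.xx` -/
def omega : Lam := abs (app (var 0) (var 0))

/-- `E₁ = ω(λw.⟨λabc.ab((wwb)(wwc))⟩)`, with `⟨M⟩ = λz.zM`. -/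
def E1 : Lam :=
  app omega (abs (abs (app (var 0) (abs (abs (abs
    (app (app (var 2) (var 1))
      (app (app (app (var 4) (var 4)) (var 1))
        (app (app (var 4) (var 4)) (var 0))))))))))

/-- `E₃ = ⟨ω(λwabc.ab(Sbc(ww)))⟩`, with `⟨M⟩ = λz.zM`. -/
def E3 : Lam :=
  abs (app (var 0) (app omega (abs (abs (abs (abs
    (app (app (var 2) (var 1))
      (app (app (app combS (var 1)) (var 0))
        (app (var 3) (var 3))))))))))

/-!
By Church–Rosser (proved with parallel reduction and complete developments) a conversion
`E₁ =β E₃` yields a common reduct. All reducts of `E₁ = ωP` lie in an explicit grammar, and so do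
all reducts of `E₃ = ⟨ωQ⟩`, because both grammars are closed under `→β`. A common reduct would be
`⟨k⟩` with `k = λabc.ab(x y)` in the first grammar and `k = λabc.ab(b g (c g'))` in the second;
then `x = b g` makes `g` a strictly smaller term lying in both grammars, an infinite descent.
`E₁` and `E₃` have the same Böhm tree, so the argument has to look at the finite reducts themselves.
-/

theorem lift_lift_of_le (t : Lam) {i j : ℕ} (hij : i ≤ j) :
    lift i (lift j t) = lift (j + 1) (lift i t) := by
  induction t generalizing i j with
  | var n => simp only [lift]; split_ifs <;> simp only [lift] <;> split_ifs <;> grind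
  | app s t ihs iht => simp only [lift, ihs hij, iht hij]
  | abs t ih => simp only [lift, ih (by omega : i + 1 ≤ j + 1)]

theorem lift_subst_of_le (t : Lam) {i k : ℕ} (u : Lam) (hik : i ≤ k) :
    lift i (subst t k u) = subst (lift i t) (k + 1) (lift i u) := by
  induction t generalizing i k u with
  | var n => simp only [lift, subst]; split_ifs <;> simp only [lift, subst] <;> split_ifs <;> grind
  | app s t ihs iht => simp only [lift, subst, ihs u hik, iht u hik]
  | abs t ih =>
    simp only [lift, subst, ih _ (by omega : i + 1 ≤ k + 1), lift_lift_of_le u (Nat.zero_le i)]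

theorem lift_subst_of_ge (t : Lam) {i k : ℕ} (u : Lam) (hki : k ≤ i) :
    lift i (subst t k u) = subst (lift (i + 1) t) k (lift i u) := by
  induction t generalizing i k u with
  | var n => simp only [lift, subst]; split_ifs <;> simp only [lift, subst] <;> split_ifs <;> grind
  | app s t ihs iht => simp only [lift, subst, ihs u hki, iht u hki]
  | abs t ih =>
    simp only [lift, subst, ih _ (by omega : k + 1 ≤ i + 1), lift_lift_of_le u (Nat.zero_le i)]

theorem subst_lift (t : Lam) (k : ℕ) (u : Lam) : subst (lift k t) k u = t := by
  induction t generalizing k u with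
  | var n => simp only [lift]; split_ifs <;> simp only [subst] <;> split_ifs <;> grind
  | app s t ihs iht => simp only [lift, subst, ihs, iht]
  | abs t ih => simp only [lift, subst, ih]

theorem subst_subst_of_le (t : Lam) {i j : ℕ} (u v : Lam) (hij : i ≤ j) :
    subst (subst t i u) j v = subst (subst t (j + 1) (lift i v)) i (subst u j v) := by
  induction t generalizing i j u v with
  | var n =>
    simp only [subst]
    split_ifs <;> simp only [subst, subst_lift] <;> (try split_ifs) <;> grind
  | app s t ihs iht => simp only [subst, ihs u v hij, iht u v hij]
  | abs t ih =>
    simp only [subst, ih _ _ (by omega : i + 1 ≤ j + 1), lift_lift_of_le v (Nat.zero_le i),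
      lift_subst_of_le u v (Nat.zero_le j)]

theorem BetaStar.app {s s' t t' : Lam} (hs : BetaStar s s') (ht : BetaStar t t') :
    BetaStar (app s t) (app s' t') :=
  (hs.lift (Lam.app · t) fun _ _ h ↦ Beta.appL t h).trans
    (ht.lift (Lam.app s' ·) fun _ _ h ↦ Beta.appR s' h)

theorem BetaStar.abs {t t' : Lam} (ht : BetaStar t t') : BetaStar (abs t) (abs t') :=
  ht.lift Lam.abs fun _ _ h ↦ Beta.abs h

theorem BetaStar.preserves {p : Lam → Prop} (hp : ∀ {s t}, p s → Beta s t → p t)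
    {s t : Lam} (h : BetaStar s t) (hs : p s) : p t := by
  induction h with
  | refl => exact hs
  | tail _ hstep ih => exact hp ih hstep

inductive Par : Lam → Lam → Prop
  | var (n : ℕ) : Par (var n) (var n)
  | app {s s' t t' : Lam} : Par s s' → Par t t' → Par (app s t) (app s' t')
  | abs {t t' : Lam} : Par t t' → Par (abs t) (abs t')
  | beta {s s' t t' : Lam} : Par s s' → Par t t' → Par (app (abs s) t) (subst s' 0 t')

namespace Par

theorem refl : ∀ t, Par t t
  | .var n => .var n
  | .app s t => .app (refl s) (refl t)
  | .abs t => .abs (refl t)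

theorem of_beta {s t : Lam} (h : Beta s t) : Par s t := by
  induction h with
  | beta t u => exact .beta (refl t) (refl u)
  | appL t _ ih => exact .app ih (refl t)
  | appR s _ ih => exact .app (refl s) ih
  | abs _ ih => exact .abs ih

theorem betaStar {s t : Lam} (h : Par s t) : BetaStar s t := by
  induction h with
  | var n => exact .refl
  | app _ _ ihs iht => exact ihs.app iht
  | abs _ ih => exact ih.abs
  | @beta s s' t t' _ _ ihs iht => exact (ihs.abs.app iht).tail (.beta s' t')

theorem lift {s t : Lam} (h : Par s t) (d : ℕ) : Par (lift d s) (lift d t) := by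
  induction h generalizing d with
  | var n => exact refl _
  | app _ _ ihs iht => exact .app (ihs d) (iht d)
  | abs _ ih => exact .abs (ih (d + 1))
  | @beta s s' t t' _ _ ihs iht =>
    rw [Lam.lift, Lam.lift, lift_subst_of_ge s' t' (Nat.zero_le d)]
    exact .beta (ihs (d + 1)) (iht d)

theorem subst {s s' u u' : Lam} (h : Par s s') (hu : Par u u') (k : ℕ) :
    Par (subst s k u) (subst s' k u') := by
  induction h generalizing k u u' with
  | var n => simp only [Lam.subst]; split_ifs <;> first | exact refl _ | exact hu
  | app _ _ ihs iht => exact .app (ihs hu k) (iht hu k)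
  | abs _ ih => exact .abs (ih (hu.lift 0) (k + 1))
  | @beta a a' b b' _ _ iha ihb =>
    rw [Lam.subst, Lam.subst, subst_subst_of_le a' b' u' (Nat.zero_le k)]
    exact .beta (iha (hu.lift 0) (k + 1)) (ihb hu k)

end Par

def develop : Lam → Lam
  | var n => var n
  | abs t => abs (develop t)
  | app (abs s) t => subst (develop s) 0 (develop t)
  | app s t => app (develop s) (develop t)

theorem Par.develop {a b : Lam} (h : Par a b) : Par b (develop a) := by
  induction h with
  | var n => exact .var n
  | abs _ ih => exact .abs ih
  | @app s s' t t' hs _ ihs iht =>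
    cases hs with
    | abs _ =>
      cases ihs with
      | abs ih₀ => exact .beta ih₀ iht
    | _ => exact .app ihs iht
  | beta _ _ ihs iht => exact ihs.subst iht 0

theorem Conv.exists_betaStar_join {s t : Lam} (h : Conv s t) :
    ∃ u, BetaStar s u ∧ BetaStar t u := by
  have hequiv := Relation.equivalence_join_reflTransGen (r := Par) fun a _ _ hb hc ↦
    ⟨develop a, .single hb.develop, .single hc.develop⟩
  obtain ⟨u, hsu, htu⟩ : Relation.Join (Relation.ReflTransGen Par) s t := by
    induction h with
    | rel h => exact ⟨_, .single (Par.of_beta h), .refl⟩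
    | refl s => exact hequiv.refl s
    | symm _ ih => exact hequiv.symm ih
    | trans _ _ ih₁ ih₂ => exact hequiv.trans ih₁ ih₂
  have hpar : Relation.ReflTransGen Par ≤ BetaStar :=
    Relation.reflTransGen_closed fun _ _ h ↦ h.betaStar
  exact ⟨u, hpar _ _ hsu, hpar _ _ htu⟩

/-- The one-step reducts, listed so that `decide` can enumerate those of a concrete term. -/
def reducts : Lam → List Lam
  | var _ => []
  | abs t => (reducts t).map abs
  | app s t =>
    (match s with | abs b => [subst b 0 t] | _ => []) ++
      (reducts s).map (app · t) ++ (reducts t).map (app s ·)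

theorem mem_reducts_of_beta {s t : Lam} (h : Beta s t) : t ∈ reducts s := by
  induction h <;> simp_all [reducts]

theorem not_beta_of_reducts_eq_nil {s t : Lam} (hs : reducts s = []) : ¬ Beta s t :=
  fun h ↦ by simpa [hs] using mem_reducts_of_beta h

theorem eq_of_beta_of_reducts_eq_singleton {s t u : Lam} (hs : reducts s = [u]) (h : Beta s t) :
    t = u := by
  simpa [hs] using mem_reducts_of_beta h

theorem not_beta_var {n : ℕ} {t : Lam} : ¬ Beta (var n) t :=
  not_beta_of_reducts_eq_nil rfl

theorem Beta.var_app_inv {n : ℕ} {t s : Lam} (h : Beta (app (var n) t) s) :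
    ∃ t', Beta t t' ∧ s = app (var n) t' := by
  cases h with
  | appL _ h => exact absurd h not_beta_var
  | appR _ h => exact ⟨_, h, rfl⟩

/-- `⟨M⟩ = λz.zM`, in this de Bruijn form only for closed `M` (otherwise lift `M`). -/
def wrap (M : Lam) : Lam := abs (app (var 0) M)

/-- `λabc.abM` -/
def lamAB (M : Lam) : Lam := abs (abs (abs (app (app (var 2) (var 1)) M)))

theorem Beta.wrap_inv {M s : Lam} (h : Beta (wrap M) s) : ∃ M', Beta M M' ∧ s = wrap M' := by
  cases h with
  | abs h =>
    obtain ⟨M', hM, rfl⟩ := h.var_app_inv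
    exact ⟨M', hM, rfl⟩

theorem Beta.lamAB_inv {M s : Lam} (h : Beta (lamAB M) s) : ∃ M', Beta M M' ∧ s = lamAB M' := by
  cases h with | abs h => cases h with | abs h => cases h with | abs h =>
  cases h with
  | appL _ h =>
    obtain ⟨_, h₁, -⟩ := h.var_app_inv
    exact absurd h₁ not_beta_var
  | appR _ h => exact ⟨_, h, rfl⟩

def FVBelow (c : ℕ) (t : Lam) : Prop := ∀ m ∈ FV t, m < c

@[simp] theorem fvBelow_var {c n : ℕ} : FVBelow c (var n) ↔ n < c := by
  simp [FVBelow, FV]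

@[simp] theorem fvBelow_app {c : ℕ} {s t : Lam} :
    FVBelow c (app s t) ↔ FVBelow c s ∧ FVBelow c t := by
  simp only [FVBelow, FV, Finset.mem_union]
  grind

@[simp] theorem fvBelow_abs {c : ℕ} {t : Lam} : FVBelow c (abs t) ↔ FVBelow (c + 1) t := by
  simp only [FVBelow, FV, Finset.mem_image, Finset.mem_erase]
  constructor
  · intro h m hm
    rcases m with _ | m
    · omega
    · exact Nat.succ_lt_succ (h m ⟨m + 1, ⟨by omega, hm⟩, rfl⟩)
  · rintro h _ ⟨m, ⟨hm0, hm⟩, rfl⟩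
    have := h m hm
    omega

theorem FVBelow.mono {c d : ℕ} {t : Lam} (h : FVBelow c t) (hcd : c ≤ d) : FVBelow d t :=
  fun m hm ↦ (h m hm).trans_le hcd

theorem subst_eq_self {t : Lam} {j : ℕ} (h : FVBelow j t) (u : Lam) : subst t j u = t := by
  induction t generalizing j u with
  | var n => simp_all [subst]
  | app s t ihs iht => simp_all [subst]
  | abs t ih => simp_all [subst]

/-- `P = λw.⟨λabc.ab((wwb)(wwc))⟩` -/
def P : Lam :=
  abs (wrap (lamAB (app (app (app (var 4) (var 4)) (var 1)) (app (app (var 4) (var 4)) (var 0)))))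

inductive E1Cat | pp | body | arg (n : ℕ)

/-- A grammar containing all reducts of `E₁`; in named notation
`g ::= ωP | PP | ⟨h⟩`, `h ::= λabc.ab(x y)`, `x ::= g b | b h`, `y ::= g c | c h`,
with categories `pp`, `body`, `arg 1`, `arg 0` for `g`, `h`, `x`, `y` (`b`, `c` are indices 1, 0). -/
inductive E1Red : E1Cat → Lam → Prop
  | omegaP : E1Red .pp (app omega P)
  | PP : E1Red .pp (app P P)
  | wrap {k : Lam} : E1Red .body k → E1Red .pp (wrap k)
  | body {x y : Lam} : E1Red (.arg 1) x → E1Red (.arg 0) y → E1Red .body (lamAB (app x y))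
  | app_var {g : Lam} {n : ℕ} : E1Red .pp g → E1Red (.arg n) (app g (var n))
  | var_app {k : Lam} {n : ℕ} : E1Red .body k → E1Red (.arg n) (app (var n) k)

def E1Cat.fvBound : E1Cat → ℕ
  | .arg n => n + 1
  | _ => 0

namespace E1Red

theorem fvBelow {i : E1Cat} {t : Lam} (h : E1Red i t) : FVBelow i.fvBound t := by
  induction h with
  | omegaP | PP => simp [E1Cat.fvBound, P, omega, Lam.wrap, lamAB]
  | wrap _ ih => simpa [Lam.wrap, E1Cat.fvBound] using ih.mono (Nat.zero_le 1)
  | body _ _ ihx ihy =>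
    simp only [E1Cat.fvBound, lamAB, fvBelow_abs, fvBelow_app, fvBelow_var] at ihx ihy ⊢
    exact ⟨by omega, ihx.mono (by omega), ihy.mono (by omega)⟩
  | app_var _ ih =>
    exact fvBelow_app.2 ⟨ih.mono (Nat.zero_le _), fvBelow_var.2 (Nat.lt_succ_self _)⟩
  | var_app _ ih =>
    exact fvBelow_app.2 ⟨fvBelow_var.2 (Nat.lt_succ_self _), ih.mono (Nat.zero_le _)⟩

theorem subst_eq_self {k : Lam} (h : E1Red .body k) (j : ℕ) (u : Lam) : subst k j u = k :=
  Lam.subst_eq_self (h.fvBelow.mono (Nat.zero_le j)) u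

theorem beta {i : E1Cat} {s t : Lam} (h : E1Red i s) (hst : Beta s t) : E1Red i t := by
  induction h generalizing t with
  | omegaP =>
    rw [eq_of_beta_of_reducts_eq_singleton (u := app P P) (by decide) hst]
    exact .PP
  | PP =>
    rw [eq_of_beta_of_reducts_eq_singleton (u := Lam.wrap (lamAB
      (app (app (app P P) (var 1)) (app (app P P) (var 0))))) (by decide) hst]
    exact .wrap (.body (.app_var .PP) (.app_var .PP))
  | wrap _ ih =>
    obtain ⟨k', hk, rfl⟩ := hst.wrap_inv
    exact .wrap (ih hk)
  | body hx hy ihx ihy =>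
    obtain ⟨M', hM, rfl⟩ := hst.lamAB_inv
    cases hM with
    | beta => cases hx
    | appL _ h => exact .body (ihx h) hy
    | appR _ h => exact .body hx (ihy h)
  | @app_var g n hg ih =>
    cases hst with
    | beta b u =>
      cases hg with
      | wrap hk =>
        show E1Red _ (app (var n) (subst _ 0 (var n)))
        rw [hk.subst_eq_self]
        exact .var_app hk
    | appL _ h => exact .app_var (ih h)
    | appR _ h => exact absurd h not_beta_var
  | var_app _ ih =>
    obtain ⟨k', hk, rfl⟩ := hst.var_app_inv
    exact .var_app (ih hk)

end E1Red

/-- `λyz.bz(yz)` and `λz.bz(cz)` under `λabc`: the contracta of `S b` and `S b c`. -/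
def Sb : Lam := abs (abs (app (app (var 3) (var 0)) (app (var 1) (var 0))))
def Sbc : Lam := abs (app (app (var 2) (var 0)) (app (var 1) (var 0)))

/-- The successive contractions of `S b c g` under `λabc`; `U₃ g g'` is `b g (c g')`. -/
def U0 (g : Lam) : Lam := app (app (app combS (var 1)) (var 0)) g
def U1 (g : Lam) : Lam := app (app Sb (var 0)) g
def U2 (g : Lam) : Lam := app Sbc g
def U3 (g g' : Lam) : Lam := app (app (var 1) g) (app (var 0) g')

/-- `ww` under `λwabc` -/
def ww : Lam := app (var 3) (var 3)

/-- `Q₀ = λwabc.ab(Sbc(ww))` and its reducts `Q₁ →β Q₂ →β Q₃` (contracting `Sbc`). -/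
def Q0 : Lam := abs (lamAB (U0 ww))
def Q1 : Lam := abs (lamAB (U1 ww))
def Q2 : Lam := abs (lamAB (U2 ww))
def Q3 : Lam := abs (lamAB (U3 ww ww))

inductive E3Cat | q | g | u | top

/-- A grammar containing all reducts of `E₃`; in named notation
`q ::= Q₀ | Q₁ | Q₂ | Q₃`, `g ::= ωq | q q | λabc.ab u`,
`u ::= U₀ g | U₁ g | U₂ g | U₃ g g`, `top ::= ⟨g⟩`. -/
inductive E3Red : E3Cat → Lam → Prop
  | q0 : E3Red .q Q0
  | q1 : E3Red .q Q1
  | q2 : E3Red .q Q2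
  | q3 : E3Red .q Q3
  | omegaQ {q : Lam} : E3Red .q q → E3Red .g (app omega q)
  | qq {q q' : Lam} : E3Red .q q → E3Red .q q' → E3Red .g (app q q')
  | lamAB {u : Lam} : E3Red .u u → E3Red .g (lamAB u)
  | u0 {g : Lam} : E3Red .g g → E3Red .u (U0 g)
  | u1 {g : Lam} : E3Red .g g → E3Red .u (U1 g)
  | u2 {g : Lam} : E3Red .g g → E3Red .u (U2 g)
  | u3 {g g' : Lam} : E3Red .g g → E3Red .g g' → E3Red .u (U3 g g')
  | wrap {g : Lam} : E3Red .g g → E3Red .top (wrap g)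

theorem subst_lamAB {M b : Lam} (hb : lift 0 b = b) :
    subst (lamAB M) 0 b = lamAB (subst M 3 b) := by
  simp [lamAB, subst, hb]

theorem subst_U0 (g b : Lam) : subst (U0 g) 3 b = U0 (subst g 3 b) := by simp [U0, subst, combS]
theorem subst_U1 (g b : Lam) : subst (U1 g) 3 b = U1 (subst g 3 b) := by simp [U1, subst, Sb]
theorem subst_U2 (g b : Lam) : subst (U2 g) 3 b = U2 (subst g 3 b) := by simp [U2, subst, Sbc]
theorem subst_U3 (g g' b : Lam) : subst (U3 g g') 3 b = U3 (subst g 3 b) (subst g' 3 b) := by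
  simp [U3, subst]
theorem subst_ww (b : Lam) : subst ww 3 b = app b b := rfl

namespace E3Red

theorem lift_eq_self {q : Lam} (h : E3Red .q q) : lift 0 q = q := by
  cases h <;> decide

theorem beta {i : E3Cat} {s t : Lam} (h : E3Red i s) (hst : Beta s t) : E3Red i t := by
  induction h generalizing t with
  | q0 => rw [eq_of_beta_of_reducts_eq_singleton (u := Q1) (by decide) hst]; exact .q1
  | q1 => rw [eq_of_beta_of_reducts_eq_singleton (u := Q2) (by decide) hst]; exact .q2
  | q2 => rw [eq_of_beta_of_reducts_eq_singleton (u := Q3) (by decide) hst]; exact .q3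
  | q3 => exact absurd hst (not_beta_of_reducts_eq_nil (by decide))
  | omegaQ hq ih =>
    cases hst with
    | beta => exact .qq hq hq
    | appL _ h => exact absurd h (not_beta_of_reducts_eq_nil (by decide))
    | appR _ h => exact .omegaQ (ih h)
  | qq hq hq' ih ih' =>
    cases hst with
    | beta b u =>
      have hb := lift_eq_self hq'
      cases hq <;>
        simp only [subst_lamAB hb, subst_U0, subst_U1, subst_U2, subst_U3, subst_ww]
      exacts [.lamAB (.u0 (.qq hq' hq')), .lamAB (.u1 (.qq hq' hq')), .lamAB (.u2 (.qq hq' hq')),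
        .lamAB (.u3 (.qq hq' hq') (.qq hq' hq'))]
    | appL _ h => exact .qq (ih h) hq'
    | appR _ h => exact .qq hq (ih' h)
  | lamAB _ ih =>
    obtain ⟨u', hu, rfl⟩ := hst.lamAB_inv
    exact .lamAB (ih hu)
  | u0 hg ih =>
    cases hst with
    | appL _ h =>
      rw [eq_of_beta_of_reducts_eq_singleton (u := app Sb (var 0)) (by decide) h]
      exact .u1 hg
    | appR _ h => exact .u0 (ih h)
  | u1 hg ih =>
    cases hst with
    | appL _ h =>
      rw [eq_of_beta_of_reducts_eq_singleton (u := Sbc) (by decide) h]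
      exact .u2 hg
    | appR _ h => exact .u1 (ih h)
  | u2 hg ih =>
    cases hst with
    | beta => exact .u3 hg hg
    | appL _ h => exact absurd h (not_beta_of_reducts_eq_nil (by decide))
    | appR _ h => exact .u2 (ih h)
  | u3 hg hg' ih ih' =>
    cases hst with
    | appL _ h =>
      obtain ⟨_, hg₁, rfl⟩ := h.var_app_inv
      exact .u3 (ih hg₁) hg'
    | appR _ h =>
      obtain ⟨_, hg₁, rfl⟩ := h.var_app_inv
      exact .u3 hg (ih' hg₁)
  | wrap _ ih =>
    obtain ⟨g', hg, rfl⟩ := hst.wrap_inv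
    exact .wrap (ih hg)

end E3Red

theorem E1Red.not_e3Red {k : Lam} (h₁ : E1Red .body k) : ¬ E3Red .g k := by
  intro h₃
  cases h₁ with | body hx _ =>
  cases h₃ with | lamAB hu =>
  cases hu with
  | u3 hg _ =>
    cases hx with
    | var_app hk => exact E1Red.not_e3Red hk hg
    | app_var hg' => cases hg'
  -- otherwise `x` is `S b c`, `Sb c` or `Sbc`, none of the form `g b` or `b h`
  | _ => cases hx
termination_by sizeOf k
decreasing_by subst_vars; simp only [lamAB, Lam.abs.sizeOf_spec, Lam.app.sizeOf_spec]; omega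

theorem e1Red_E1 : E1Red .pp E1 := .omegaP

theorem e3Red_E3 : E3Red .top E3 := .wrap (.omegaQ .q0)

/-- the evaluators `E₁` and `E₃` are inconvertible. -/
theorem E1_ne_E3 : ¬ Conv E1 E3 := by
  intro h
  obtain ⟨u, h₁, h₃⟩ := h.exists_betaStar_join
  have hu₁ : E1Red .pp u := h₁.preserves E1Red.beta e1Red_E1
  have hu₃ : E3Red .top u := h₃.preserves E3Red.beta e3Red_E3
  cases hu₃ with | wrap hg =>
  cases hu₁ with | wrap hk =>
  exact hk.not_e3Red hg

end Lam
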